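/- arXiv:2505.10710 — 3 statements merged into one kernel-verified Lean document; each statement's English description precedes it below -/
import Mathlib

section
/- Define for a ∈ (0,1), n ≥ 1, and x ∈ ℝ∖{0}: P_{2n-1}(x;a) := 1/x − L_n((2x² − (1+a²))/(1−a²); a) / (x · L_n(−(1+a²)/(1−a²); a)), where L_n(x;a) := 2^{-(n-1)}(T_n(x) + ((1-a)/(1+a)) T_{n-1}(x)). Then P_{2n-1}(·;a) extends to an odd polynomial function on ℝ of degree 2n−1 (with value 0 at x = 0). -/
/-!
With `M(y) := Lₙ((2y - (1 + a²))/(1 - a²); a)`, a polynomial of degree `n` in `y`, we have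
`P(x) = (M(0) - M(x²)) / (x M(0))`. As `M(0) - M(x²)` is divisible by `x²`, this is `x` times a
polynomial in `x²`, of degree `2n - 1`.

The only real input is `M(0) ≠ 0`. With `s = -(1 + a)/(1 - a)` the point `-(1 + a²)/(1 - a²)` is
`(s + s⁻¹)/2` and `(1 - a)/(1 + a) = -s⁻¹`, so `Tₖ((s + s⁻¹)/2) = (sᵏ + s⁻ᵏ)/2` gives
`M(0) = sⁿ⁻¹ (s - s⁻¹) / 2ⁿ`, which is nonzero because `a ≠ 0`.
-/

open Polynomial

noncomputable def Lpoly (n : ℕ) (a : ℝ) : Polynomial ℝ :=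
  Polynomial.C (((2 : ℝ) ^ (n - 1))⁻¹) *
    (Polynomial.Chebyshev.T ℝ (n : ℤ) +
      Polynomial.C ((1 - a) / (1 + a)) * Polynomial.Chebyshev.T ℝ ((n : ℤ) - 1))

/-- The matrix-inversion approximant `P_{2n-1}(x;a)` for `x ≠ 0`. -/
noncomputable def Pfun (n : ℕ) (a : ℝ) (x : ℝ) : ℝ :=
  1 / x - (Lpoly n a).eval ((2 * x ^ 2 - (1 + a ^ 2)) / (1 - a ^ 2)) /
    (x * (Lpoly n a).eval (-((1 + a ^ 2) / (1 - a ^ 2))))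

namespace Polynomial

section OddQuotient

variable {K : Type*} [Field K]

lemma natDegree_X_mul_divX_comp_X_sq (M : K[X]) :
    (X * M.divX.comp (X ^ 2)).natDegree = 2 * M.natDegree - 1 := by
  by_cases h : M.divX = 0
  · have hM : M.natDegree = 0 := by rw [divX_eq_zero_iff.mp h, natDegree_C]
    simp [h, hM]
  · have hM : M.natDegree ≠ 0 := fun hM => h (divX_eq_zero_iff.mpr (eq_C_of_natDegree_eq_zero hM))
    have hcomp : M.divX.comp (X ^ 2) ≠ 0 := by
      intro hc
      rw [comp_eq_zero_iff] at hc
      rcases hc with hc | ⟨-, hc⟩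
      · exact h hc
      · simpa using congrArg natDegree hc
    rw [natDegree_X_mul hcomp, natDegree_comp, natDegree_X_pow,
      natDegree_divX_eq_natDegree_tsub_one]
    omega

lemma exists_odd_eq_inv_sub_eval_sq_div (M : K[X]) (hM : M.eval 0 ≠ 0) :
    ∃ p : K[X], p.natDegree = 2 * M.natDegree - 1 ∧
      (∀ x : K, p.eval (-x) = -p.eval x) ∧ p.eval 0 = 0 ∧
      ∀ x : K, x ≠ 0 → p.eval x = 1 / x - M.eval (x ^ 2) / (x * M.eval 0) := by
  refine ⟨C (-(M.eval 0)⁻¹) * (X * M.divX.comp (X ^ 2)), ?_, fun x => ?_, by simp, fun x hx => ?_⟩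
  · rw [natDegree_C_mul (neg_ne_zero.mpr (inv_ne_zero hM)), natDegree_X_mul_divX_comp_X_sq]
  · simp
  · have hsplit : M.eval (x ^ 2) = x ^ 2 * M.divX.eval (x ^ 2) + M.eval 0 := by
      conv_lhs => rw [← X_mul_divX_add M]
      simp [coeff_zero_eq_eval_zero]
    rw [hsplit]
    simp only [eval_mul, eval_C, eval_X, eval_comp, eval_pow]
    field_simp
    ring

end OddQuotient

namespace Chebyshev

variable {K : Type*} [Field K] [NeZero (2 : K)]

lemma T_eval_add_inv_div_two {x : K} (hx : x ≠ 0) (n : ℕ) :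
    (T K n).eval ((x + x⁻¹) / 2) = (x ^ n + x⁻¹ ^ n) / 2 := by
  let _ : Invertible (2 : K) := invertibleOfNonzero two_ne_zero
  have h := congrArg (eval (x + x⁻¹)) (dickson_one_one_eq_chebyshev_T K n)
  rw [dickson_one_one_eval_add_inv x x⁻¹ (mul_inv_cancel₀ hx)] at h
  simp only [eval_mul, eval_ofNat, eval_comp, eval_C, eval_X, invOf_eq_inv] at h
  rw [h, inv_mul_eq_div]
  field_simp

lemma T_sub_inv_mul_T_eval_add_inv_div_two {x : K} (hx : x ≠ 0) (m : ℕ) :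
    (T K (m + 1) - Polynomial.C x⁻¹ * T K m).eval ((x + x⁻¹) / 2) = x ^ m * (x - x⁻¹) / 2 := by
  have h := T_eval_add_inv_div_two hx (m + 1)
  push_cast at h
  rw [eval_sub, eval_mul, eval_C, h, T_eval_add_inv_div_two hx m]
  field_simp
  linear_combination x⁻¹ ^ m * mul_inv_cancel₀ hx

end Chebyshev

end Polynomial

lemma natDegree_Lpoly {n : ℕ} (hn : 1 ≤ n) (a : ℝ) : (Lpoly n a).natDegree = n := by
  have hT (k : ℤ) : (Chebyshev.T ℝ k).natDegree = k.natAbs := Chebyshev.natDegree_T ℝ k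
  rw [Lpoly, natDegree_C_mul (by positivity), natDegree_add_eq_left_of_natDegree_lt, hT,
    Int.natAbs_natCast]
  calc _ ≤ (Chebyshev.T ℝ ((n : ℤ) - 1)).natDegree := natDegree_C_mul_le _ _
    _ < _ := by rw [hT, hT]; omega

lemma Lpoly_eval_ne_zero {n : ℕ} (hn : 1 ≤ n) {a : ℝ} (ha₀ : a ≠ 0) (ha₁ : a ^ 2 ≠ 1) :
    (Lpoly n a).eval (-((1 + a ^ 2) / (1 - a ^ 2))) ≠ 0 := by
  obtain ⟨m, rfl⟩ : ∃ m, n = m + 1 := ⟨n - 1, by omega⟩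
  have hsub : 1 - a ≠ 0 := fun h => ha₁ (by rw [← sub_eq_zero.mp h]; norm_num)
  have hadd : 1 + a ≠ 0 := fun h => ha₁ (by rw [eq_neg_of_add_eq_zero_right h]; norm_num)
  have hsq : 1 - a ^ 2 ≠ 0 := sub_ne_zero.mpr (Ne.symm ha₁)
  set s : ℝ := -((1 + a) / (1 - a))
  have hs : s ≠ 0 := by simp [s, hsub, hadd]
  have hs_inv : s⁻¹ = -((1 - a) / (1 + a)) := by rw [inv_neg, inv_div]
  have hpoint : -((1 + a ^ 2) / (1 - a ^ 2)) = (s + s⁻¹) / 2 := by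
    rw [hs_inv]; simp only [s]; field_simp; ring
  have hLpoly : Lpoly (m + 1) a =
      C ((2 : ℝ) ^ m)⁻¹ * (Chebyshev.T ℝ (m + 1) - C s⁻¹ * Chebyshev.T ℝ m) := by
    rw [Lpoly, hs_inv, C_neg, neg_mul, sub_neg_eq_add]; push_cast; rw [add_sub_cancel_right]
  have hs_sub : s - s⁻¹ = -4 * a / (1 - a ^ 2) := by
    rw [hs_inv]; simp only [s]; field_simp; ring
  rw [hLpoly, hpoint, eval_mul, eval_C, Chebyshev.T_sub_inv_mul_T_eval_add_inv_div_two hs, hs_sub]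
  simp [ha₀, hs, hsq]

theorem Pfun_extends_to_odd_polynomial (n : ℕ) (hn : 1 ≤ n) (a : ℝ)
    (ha : a ∈ Set.Ioo (0 : ℝ) 1) :
    ∃ p : Polynomial ℝ, p.natDegree = 2 * n - 1 ∧
      (∀ x : ℝ, p.eval (-x) = -p.eval x) ∧ p.eval 0 = 0 ∧
      ∀ x : ℝ, x ≠ 0 → p.eval x = Pfun n a x := by
  obtain ⟨ha₀, ha₁⟩ := ha
  have hsq : a ^ 2 < 1 := by nlinarith
  set g : ℝ[X] := C (2 / (1 - a ^ 2)) * X - C ((1 + a ^ 2) / (1 - a ^ 2))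
  have hg (x : ℝ) : g.eval (x ^ 2) = (2 * x ^ 2 - (1 + a ^ 2)) / (1 - a ^ 2) := by
    simp only [g, eval_sub, eval_mul, eval_C, eval_X]; ring
  have hg0 : g.eval 0 = -((1 + a ^ 2) / (1 - a ^ 2)) := by simp [g]
  obtain ⟨p, hdeg, hodd, hp0, hp⟩ := exists_odd_eq_inv_sub_eval_sq_div ((Lpoly n a).comp g)
    (by rw [eval_comp, hg0]; exact Lpoly_eval_ne_zero hn ha₀.ne' hsq.ne)
  refine ⟨p, ?_, hodd, hp0, fun x hx => ?_⟩
  · have hg_deg : g.natDegree = 1 :=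
      natDegree_sub_C.trans (natDegree_C_mul_X _ (div_ne_zero two_ne_zero (by linarith)))
    rw [hdeg, natDegree_comp, natDegree_Lpoly hn, hg_deg, mul_one]
  · rw [hp x hx, Pfun, eval_comp, eval_comp, hg, hg0]
end

section
/- Let P ∈ ℂ[z] of degree d with |P(z)| ≤ 1 on 𝕋 and P not unimodular-constant times a Blaschke-type product making 1−|P|² ≡ 0. Then there exists Q ∈ ℂ[z] with deg Q ≤ d such that |P(z)|² + |Q(z)|² = 1 for all z ∈ 𝕋. -/
/-!
Let `P̃ = reflect d (conj P)`, so that `P̃ z = z ^ d * conj (P z)` on the unit circle. Then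
`R = X ^ d - P * P̃` has degree at most `2 d` and `R z / z ^ d = 1 - ‖P z‖ ^ 2 ≥ 0` on the circle,
and the theorem is the Fejér–Riesz factorisation of such an `R`, proved by induction on `d`.
Realness of `R z / z ^ d` on the circle makes `R` self-reciprocal, so a root `w ∉ {0} ∪ 𝕋` comes
with the root `1 / conj w`, while a root `w ∈ 𝕋` is at least double because `R z / z ^ d` attains
its minimum `0` there. Either way, on the circle
`(z - w) (z - 1 / conj w) = -(z / conj w) ‖z - w‖ ^ 2`, so dividing `R` by
`(X - w) (X - 1 / conj w)` splits off the factor `‖(X - w) z‖ ^ 2` and leaves a nonnegative `R₁`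
for `d - 1`. A root at `0` is split off as `X`, self-reciprocity killing the top coefficient too.
-/

open Complex Polynomial Metric Filter Topology ComplexConjugate
open scoped ComplexOrder

namespace Complex

lemma isPreconnected_sphere_zero_one : IsPreconnected (sphere (0 : ℂ) 1) :=
  isPreconnected_sphere (by simp [rank_real_complex]) 0 1

lemma sphere_zero_one_nontrivial : (sphere (0 : ℂ) 1).Nontrivial :=
  ⟨1, by simp, -1, by simp, by norm_num⟩

lemma infinite_sphere_zero_one : (sphere (0 : ℂ) 1).Infinite :=
  isPreconnected_sphere_zero_one.infinite_of_nontrivial sphere_zero_one_nontrivial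

lemma mem_closure_sphere_zero_one_diff {w : ℂ} (hw : ‖w‖ = 1) :
    w ∈ closure (sphere (0 : ℂ) 1 \ {w}) := by
  have := isPreconnected_sphere_zero_one.preperfect_of_nontrivial sphere_zero_one_nontrivial w
    (by simpa using hw)
  exact (accPt_principal_iff_clusterPt.1 this).mem_closure

lemma ne_zero_of_norm_eq_one {z : ℂ} (hz : ‖z‖ = 1) : z ≠ 0 :=
  norm_ne_zero_iff.1 (hz.trans_ne one_ne_zero)

lemma hasDerivAt_eq_zero_of_nonneg {f : ℝ → ℂ} {f' : ℂ} {a : ℝ} (hf : HasDerivAt f f' a)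
    (ha : f a = 0) (hnonneg : ∀ᶠ u in 𝓝 a, 0 ≤ f u) : f' = 0 := by
  have hre : HasDerivAt (fun u => (f u).re) f'.re a := reCLM.hasFDerivAt.comp_hasDerivAt a hf
  have him : HasDerivAt (fun u => (f u).im) f'.im a := imCLM.hasFDerivAt.comp_hasDerivAt a hf
  have hmin : IsLocalMin (fun u => (f u).re) a := by
    filter_upwards [hnonneg] with u hu
    simpa [ha] using (nonneg_iff.1 hu).1
  have him0 : (fun u => (f u).im) =ᶠ[𝓝 a] fun _ => 0 := by
    filter_upwards [hnonneg] with u hu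
    exact (nonneg_iff.1 hu).2.symm
  exact Complex.ext (hmin.hasDerivAt_eq_zero hre)
    (him.unique ((hasDerivAt_const a (0 : ℝ)).congr_of_eventuallyEq him0))

lemma nonneg_of_ofReal_mul_nonneg {r : ℝ} {x : ℂ} (hr : 0 < r) (h : 0 ≤ (r : ℂ) * x) : 0 ≤ x := by
  rw [nonneg_iff, re_ofReal_mul, im_ofReal_mul] at h
  rw [nonneg_iff]
  exact ⟨(mul_nonneg_iff_of_pos_left hr).1 h.1,
    ((mul_eq_zero.1 h.2.symm).resolve_left hr.ne').symm⟩

lemma sub_mul_sub_inv_conj_eq {z w : ℂ} (hz : ‖z‖ = 1) (hw : w ≠ 0) :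
    (z - w) * (z - (conj w)⁻¹) = -(z * (conj w)⁻¹) * (‖z - w‖ ^ 2 : ℝ) := by
  have hz0 := ne_zero_of_norm_eq_one hz
  have hw' : conj w ≠ 0 := by simpa using hw
  rw [ofReal_pow, ← mul_conj', map_sub, ← inv_eq_conj hz]
  field_simp
  ring

end Complex

namespace Polynomial

lemma eval_reflect_map_conj {N : ℕ} {f : ℂ[X]} (hf : f.natDegree ≤ N) {z : ℂ} (hz : z ≠ 0) :
    (reflect N (f.map (starRingEnd ℂ))).eval z = z ^ N * conj (f.eval (conj z)⁻¹) := by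
  let := invertibleOfNonzero (inv_ne_zero hz)
  have := eval₂_reflect_mul_pow (RingHom.id ℂ) z⁻¹ N (f.map (starRingEnd ℂ))
    (natDegree_map_le.trans hf)
  simp only [invOf_eq_inv, inv_inv, eval₂_id] at this
  rw [← eval_map_apply, map_inv₀, Complex.conj_conj, ← this, mul_comm, mul_assoc, ← mul_pow,
    inv_mul_cancel₀ hz, one_pow, mul_one]

lemma eval_reflect_map_conj_of_norm_eq_one {N : ℕ} {f : ℂ[X]} (hf : f.natDegree ≤ N) {z : ℂ}
    (hz : ‖z‖ = 1) : (reflect N (f.map (starRingEnd ℂ))).eval z = z ^ N * conj (f.eval z) := by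
  rw [eval_reflect_map_conj hf (ne_zero_of_norm_eq_one hz), ← inv_eq_conj hz, inv_inv]

lemma eq_reflect_map_conj_of_isSelfAdjoint {d : ℕ} {R : ℂ[X]} (hdeg : R.natDegree ≤ 2 * d)
    (hR : ∀ z : ℂ, ‖z‖ = 1 → IsSelfAdjoint (R.eval z / z ^ d)) :
    R = reflect (2 * d) (R.map (starRingEnd ℂ)) := by
  refine eq_of_infinite_eval_eq _ _ (infinite_sphere_zero_one.mono fun z hz => ?_)
  rw [mem_sphere_zero_iff_norm] at hz
  have hz0 := ne_zero_of_norm_eq_one hz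
  have hreal := (hR z hz).star_eq
  rw [star_div₀, star_pow, star_def, ← inv_eq_conj hz,
    div_eq_iff (pow_ne_zero _ (inv_ne_zero hz0))] at hreal
  rw [Set.mem_ofPred_eq, eval_reflect_map_conj_of_norm_eq_one hdeg hz, hreal, inv_pow]
  field_simp
  ring

/-- `R z / z ^ d` is the value at `z = e^{iθ}` of the trigonometric polynomial
`∑ₖ Rₖ e^{i(k-d)θ}`; in the order of `ℂ`, `0 ≤` means real and nonnegative. -/
def IsNonnegOnCircle (d : ℕ) (R : ℂ[X]) : Prop :=
  ∀ z : ℂ, ‖z‖ = 1 → 0 ≤ R.eval z / z ^ d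

lemma isNonnegOnCircle_of_forall_ne {d : ℕ} {R : ℂ[X]} (w : ℂ)
    (h : ∀ z : ℂ, ‖z‖ = 1 → z ≠ w → 0 ≤ R.eval z / z ^ d) : IsNonnegOnCircle d R := by
  intro z hz
  rcases ne_or_eq z w with hzw | rfl
  · exact h z hz hzw
  have hcont : ContinuousAt (fun x => R.eval x / x ^ d) z := R.continuous.continuousAt.div
    (continuousAt_id.pow d) (pow_ne_zero d (ne_zero_of_norm_eq_one hz))
  have := hcont.continuousWithinAt.mem_closure (mem_closure_sphere_zero_one_diff hz)
    (t := Set.Ici 0) (fun x hx => h x (by simpa using hx.1) hx.2)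
  rwa [closure_Ici] at this

lemma eval_X_mul_div_pow_succ (R : ℂ[X]) (d : ℕ) {z : ℂ} (hz : z ≠ 0) :
    (X * R).eval z / z ^ (d + 1) = R.eval z / z ^ d := by
  rw [eval_mul, eval_X, pow_succ]
  field_simp

namespace IsNonnegOnCircle

variable {d : ℕ} {R : ℂ[X]}

lemma eq_reflect_map_conj (hR : IsNonnegOnCircle d R) (hdeg : R.natDegree ≤ 2 * d) :
    R = reflect (2 * d) (R.map (starRingEnd ℂ)) :=
  eq_reflect_map_conj_of_isSelfAdjoint hdeg fun z hz => (hR z hz).isSelfAdjoint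

lemma coeff_zero_eq_conj_coeff (hR : IsNonnegOnCircle d R) (hdeg : R.natDegree ≤ 2 * d) :
    R.coeff 0 = conj (R.coeff (2 * d)) := by
  conv_lhs => rw [hR.eq_reflect_map_conj hdeg]
  rw [coeff_reflect, revAt_zero, coeff_map]

lemma isRoot_derivative (hR : IsNonnegOnCircle d R) {w : ℂ} (hw : ‖w‖ = 1) (hroot : R.IsRoot w) :
    R.derivative.IsRoot w := by
  set γ : ℝ → ℂ := fun u => w * exp (u * I)
  have hγ : HasDerivAt γ (w * I) 0 := by
    simpa using ((hasDerivAt_id (0 : ℝ)).ofReal_comp.mul_const I).cexp.const_mul w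
  have hγ0 : γ 0 = w := by simp [γ]
  have hF := ((R.hasDerivAt (γ 0)).comp (0 : ℝ) hγ).div (hγ.pow d)
    (by simp [hγ0, ne_zero_of_norm_eq_one hw])
  have := hasDerivAt_eq_zero_of_nonneg hF (by simp [hγ0, hroot.eq_zero])
    (Eventually.of_forall fun u => hR _ (by simp [γ, hw, norm_exp_ofReal_mul_I]))
  simpa [hγ0, hroot.eq_zero, ne_zero_of_norm_eq_one hw] using this

lemma mul_dvd_of_isRoot (hR : IsNonnegOnCircle d R) (hdeg : R.natDegree ≤ 2 * d) (hR0 : R ≠ 0)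
    {w : ℂ} (hw0 : w ≠ 0) (hroot : R.IsRoot w) : (X - C w) * (X - C (conj w)⁻¹) ∣ R := by
  by_cases hw : ‖w‖ = 1
  · rw [← inv_eq_conj hw, inv_inv, ← sq, ← le_rootMultiplicity_iff hR0]
    exact (one_lt_rootMultiplicity_iff_isRoot hR0).2 ⟨hroot, hR.isRoot_derivative hw hroot⟩
  have hroot' : R.IsRoot (conj w)⁻¹ := by
    rw [IsRoot, hR.eq_reflect_map_conj hdeg, eval_reflect_map_conj hdeg (by simpa using hw0),
      map_inv₀, conj_conj, inv_inv, hroot.eq_zero, map_zero, mul_zero]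
  have hne : w ≠ (conj w)⁻¹ := by
    intro h
    apply hw
    have : (‖w‖ ^ 2 : ℂ) = 1 := by
      rw [← mul_conj']
      nth_rewrite 1 [h]
      exact inv_mul_cancel₀ (by simpa using hw0)
    exact (pow_eq_one_iff_of_nonneg (norm_nonneg w) two_ne_zero).1 (by exact_mod_cast this)
  exact (isCoprime_X_sub_C_of_isUnit_sub (sub_ne_zero.2 hne).isUnit).mul_dvd
    (dvd_iff_isRoot.2 hroot) (dvd_iff_isRoot.2 hroot')

lemma exists_eq_X_mul (hR : IsNonnegOnCircle (d + 1) R) (hdeg : R.natDegree ≤ 2 * (d + 1))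
    (hroot : R.IsRoot 0) :
    ∃ R₁ : ℂ[X], R = X * R₁ ∧ R₁.natDegree ≤ 2 * d ∧ IsNonnegOnCircle d R₁ := by
  obtain ⟨R₁, rfl⟩ := (X_dvd_iff (f := R)).2 (by rwa [coeff_zero_eq_eval_zero])
  refine ⟨R₁, rfl, ?_, fun z hz =>
    eval_X_mul_div_pow_succ R₁ d (ne_zero_of_norm_eq_one hz) ▸ hR z hz⟩
  have htop : R₁.coeff (2 * d + 1) = 0 := by
    have := hR.coeff_zero_eq_conj_coeff hdeg
    rwa [coeff_zero_eq_eval_zero, hroot.eq_zero, eq_comm, map_eq_zero, mul_add_one,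
      coeff_X_mul] at this
  have hdeg₁ : R₁.natDegree ≤ 2 * d + 1 := natDegree_le_iff_coeff_eq_zero.2 fun n hn => by
    rw [← coeff_X_mul]
    exact coeff_eq_zero_of_natDegree_lt (by omega)
  simpa using natDegree_le_pred hdeg₁ htop

lemma exists_norm_sq_mul_of_isRoot (hR : IsNonnegOnCircle (d + 1) R)
    (hdeg : R.natDegree ≤ 2 * (d + 1)) (hR0 : R ≠ 0) {w : ℂ} (hw0 : w ≠ 0) (hroot : R.IsRoot w) :
    ∃ R₁ : ℂ[X], R₁.natDegree ≤ 2 * d ∧ IsNonnegOnCircle d R₁ ∧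
      ∀ z : ℂ, ‖z‖ = 1 → R.eval z / z ^ (d + 1) = ‖z - w‖ ^ 2 * (R₁.eval z / z ^ d) := by
  obtain ⟨R₁, rfl⟩ := hR.mul_dvd_of_isRoot hdeg hR0 hw0 hroot
  have hR₁0 : R₁ ≠ 0 := by rintro rfl; simp at hR0
  have heval (z : ℂ) (hz : ‖z‖ = 1) : ((X - C w) * (X - C (conj w)⁻¹) * R₁).eval z / z ^ (d + 1) =
      ‖z - w‖ ^ 2 * ((C (-(conj w)⁻¹) * R₁).eval z / z ^ d) := by
    have := ne_zero_of_norm_eq_one hz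
    simp only [eval_mul, eval_sub, eval_X, eval_C, sub_mul_sub_inv_conj_eq hz hw0]
    push_cast
    field_simp
    ring
  refine ⟨C (-(conj w)⁻¹) * R₁, ?_, isNonnegOnCircle_of_forall_ne w fun z hz hzw => ?_, heval⟩
  · refine natDegree_C_mul_le _ _ |>.trans ?_
    rw [natDegree_mul (by simp [X_sub_C_ne_zero]) hR₁0, natDegree_mul (X_sub_C_ne_zero w)
      (X_sub_C_ne_zero _), natDegree_X_sub_C, natDegree_X_sub_C] at hdeg
    omega
  · refine nonneg_of_ofReal_mul_nonneg (r := ‖z - w‖ ^ 2) (by positivity [sub_ne_zero.2 hzw]) ?_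
    exact_mod_cast heval z hz ▸ hR z hz

lemma exists_norm_sq_mul (hR : IsNonnegOnCircle (d + 1) R) (hdeg : R.natDegree ≤ 2 * (d + 1))
    (hR0 : R ≠ 0) :
    ∃ S R₁ : ℂ[X], S.natDegree ≤ 1 ∧ R₁.natDegree ≤ 2 * d ∧ IsNonnegOnCircle d R₁ ∧
      ∀ z : ℂ, ‖z‖ = 1 → R.eval z / z ^ (d + 1) = ‖S.eval z‖ ^ 2 * (R₁.eval z / z ^ d) := by
  have hdeg_pos : 0 < R.degree := by
    rw [degree_eq_natDegree hR0, Nat.cast_pos, Nat.pos_iff_ne_zero]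
    intro h
    have hcoeff := hR.coeff_zero_eq_conj_coeff hdeg
    rw [coeff_eq_zero_of_natDegree_lt (n := 2 * (d + 1)) (by omega), map_zero] at hcoeff
    exact hR0 (by rw [eq_C_of_natDegree_eq_zero h, hcoeff, C_0])
  obtain ⟨w, hroot⟩ := Complex.exists_root hdeg_pos
  rcases eq_or_ne w 0 with rfl | hw0
  · obtain ⟨R₁, rfl, hR₁deg, hR₁⟩ := hR.exists_eq_X_mul hdeg hroot
    refine ⟨1, R₁, by simp, hR₁deg, hR₁, fun z hz => ?_⟩
    rw [eval_X_mul_div_pow_succ R₁ d (ne_zero_of_norm_eq_one hz)]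
    simp
  · obtain ⟨R₁, hR₁deg, hR₁, heval⟩ := hR.exists_norm_sq_mul_of_isRoot hdeg hR0 hw0 hroot
    exact ⟨X - C w, R₁, natDegree_X_sub_C_le w, hR₁deg, hR₁, by simpa using heval⟩

theorem exists_eq_norm_sq (hR : IsNonnegOnCircle d R) (hdeg : R.natDegree ≤ 2 * d) :
    ∃ Q : ℂ[X], Q.natDegree ≤ d ∧ ∀ z : ℂ, ‖z‖ = 1 → R.eval z / z ^ d = ‖Q.eval z‖ ^ 2 := by
  induction d generalizing R with
  | zero =>
    rw [eq_C_of_natDegree_le_zero hdeg] at hR ⊢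
    obtain ⟨r, hr, hrR⟩ := RCLike.nonneg_iff_exists_ofReal.1 (by simpa using hR 1 (by simp))
    refine ⟨C (√r : ℂ), (natDegree_C _).le, fun z _ => ?_⟩
    simp [← hrR, abs_of_nonneg (Real.sqrt_nonneg r), ← ofReal_pow, Real.sq_sqrt hr]
  | succ d ih =>
    rcases eq_or_ne R 0 with rfl | hR0
    · exact ⟨0, by simp, fun z _ => by simp⟩
    obtain ⟨S, R₁, hS, hR₁deg, hR₁, heval⟩ := hR.exists_norm_sq_mul hdeg hR0
    obtain ⟨Q₁, hQ₁, hQ₁eval⟩ := ih hR₁ hR₁deg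
    refine ⟨S * Q₁, natDegree_mul_le.trans (by omega), fun z hz => ?_⟩
    rw [heval z hz, hQ₁eval z hz, eval_mul, norm_mul]
    push_cast
    ring

end IsNonnegOnCircle

end Polynomial

theorem complementary_polynomial_exists_general (P : Polynomial ℂ) (d : ℕ) (hd : P.natDegree = d)
    (hP : ∀ z : ℂ, ‖z‖ = 1 → ‖P.eval z‖ ≤ 1) :
    ∃ Q : Polynomial ℂ, Q.natDegree ≤ d ∧
      ∀ z : ℂ, ‖z‖ = 1 →
        ‖P.eval z‖ ^ 2 + ‖Q.eval z‖ ^ 2 = 1 := by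
  set R : ℂ[X] := X ^ d - P * reflect d (P.map (starRingEnd ℂ))
  have hReval (z : ℂ) (hz : ‖z‖ = 1) : R.eval z / z ^ d = ((1 - ‖P.eval z‖ ^ 2 : ℝ) : ℂ) := by
    have := ne_zero_of_norm_eq_one hz
    rw [eval_sub, eval_mul, eval_pow, eval_X, eval_reflect_map_conj_of_norm_eq_one hd.le hz]
    push_cast
    rw [← mul_conj']
    field_simp
  have hdeg : R.natDegree ≤ 2 * d := by
    refine (natDegree_sub_le _ _).trans (max_le (by simp; omega) (natDegree_mul_le.trans ?_))
    have := natDegree_reflect_le (N := d) (p := P.map (starRingEnd ℂ))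
    have := natDegree_map_le (f := starRingEnd ℂ) (p := P)
    omega
  have hR : IsNonnegOnCircle d R := fun z hz => by
    rw [hReval z hz, zero_le_real, sub_nonneg]
    exact pow_le_one₀ (norm_nonneg _) (hP z hz)
  obtain ⟨Q, hQdeg, hQ⟩ := hR.exists_eq_norm_sq hdeg
  refine ⟨Q, hQdeg, fun z hz => ?_⟩
  have := (hReval z hz).symm.trans (hQ z hz)
  norm_cast at this
  linarith

theorem complementary_polynomial_exists (P : Polynomial ℂ) (d : ℕ) (hd : P.natDegree = d)
    (hP : ∀ z : ℂ, ‖z‖ = 1 → ‖P.eval z‖ ≤ 1)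
    (hPne : ¬∀ z : ℂ, ‖z‖ = 1 → ‖P.eval z‖ = 1) :
    ∃ Q : Polynomial ℂ, Q.natDegree ≤ d ∧
      ∀ z : ℂ, ‖z‖ = 1 →
        ‖P.eval z‖ ^ 2 + ‖Q.eval z‖ ^ 2 = 1 :=
  complementary_polynomial_exists_general P d hd hP
end

section
/- Let P, Q₁, Q₂ ∈ ℂ[z] with |P|² + |Q₁|² = 1 = |P|² + |Q₂|² on 𝕋, and suppose Q₁ and Q₂ both have no roots in the open unit disk 𝔻 and are not identically zero. Then there exists λ ∈ ℂ with |λ| = 1 such that Q₂ = λ·Q₁. -/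
/-!
On the unit circle `conj z = z⁻¹`, so `‖Q z‖² = z⁻ⁿ · Q z · Q* z` with `n = deg Q` and
`Q* = conjReverse Q`, whose roots are the reflections `(conj α)⁻¹` of the nonzero roots `α` of `Q`.
Hence `‖Q₁‖ = ‖Q₂‖` on the circle is the polynomial identity `X^{n₂} Q₁ Q₁* = X^{n₁} Q₂ Q₂*`.
Comparing multiplicities at `α ≠ 0` gives `m_α Q₁ + m_{α'} Q₁ = m_α Q₂ + m_{α'} Q₂` with
`α' = (conj α)⁻¹`: outside the closed disk `α'` lies in `𝔻`, where neither `Qᵢ` vanishes, and on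
the circle `α' = α`. So `Q₁` and `Q₂` have the same roots with multiplicities and differ by a
constant factor, of modulus one since `‖Q₁‖ = ‖Q₂‖` on the circle.
-/

open Polynomial ComplexConjugate

namespace Polynomial

section Field

variable {K : Type*} [Field K]

theorem eval_reverse_of_ne_zero (p : K[X]) {z : K} (hz : z ≠ 0) :
    p.reverse.eval z = z ^ p.natDegree * p.eval z⁻¹ := by
  have : Invertible z⁻¹ := invertibleOfNonzero (inv_ne_zero hz)
  have h := eval₂_reverse_mul_pow (RingHom.id K) z⁻¹ p
  rw [invOf_eq_inv, inv_inv, eval₂_id, eval₂_id] at h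
  rw [← h, mul_left_comm, ← mul_pow, mul_inv_cancel₀ hz, one_pow, mul_one]

variable [StarRing K]

noncomputable def conjReverse (p : K[X]) : K[X] :=
  (p.map (starRingEnd K)).reverse

theorem conjReverse_eq_zero {p : K[X]} : conjReverse p = 0 ↔ p = 0 := by
  rw [conjReverse, reverse_eq_zero, Polynomial.map_eq_zero]

theorem conjReverse_mul (p q : K[X]) : conjReverse (p * q) = conjReverse p * conjReverse q := by
  rw [conjReverse, Polynomial.map_mul, reverse_mul_of_domain, conjReverse, conjReverse]

theorem conjReverse_pow (p : K[X]) (n : ℕ) : conjReverse (p ^ n) = conjReverse p ^ n := by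
  induction n with
  | zero => simp [conjReverse, reverse]
  | succ n ih => rw [pow_succ, conjReverse_mul, ih, pow_succ]

theorem eval_conjReverse (p : K[X]) {z : K} (hz : z ≠ 0) :
    (conjReverse p).eval z = z ^ p.natDegree * conj (p.eval (conj z⁻¹)) := by
  rw [conjReverse, eval_reverse_of_ne_zero _ hz, natDegree_map, eval_map, ← eval₂_at_apply,
    starRingEnd_self_apply]

theorem conjReverse_X_sub_C {a : K} (ha : a ≠ 0) :
    conjReverse (X - C a) = C (-conj a) * (X - C (conj a⁻¹)) := by
  have hreflect : reflect 1 (X - C (conj a)) = 1 - C (conj a) * X := by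
    rw [reflect_sub, reflect_C, ← pow_one X, reflect_monomial]
    simp
  have hconj : conj a * conj a⁻¹ = 1 := by rw [← map_mul, mul_inv_cancel₀ ha, map_one]
  rw [conjReverse, Polynomial.map_sub, map_X, map_C, reverse, natDegree_X_sub_C, hreflect,
    mul_sub, ← C_mul, neg_mul, hconj, C_neg, C_neg, C_1]
  ring

theorem rootMultiplicity_conjReverse {p : K[X]} (hp : p ≠ 0) {α : K} (hα : α ≠ 0) :
    rootMultiplicity α (conjReverse p) = rootMultiplicity (conj α⁻¹) p := by
  obtain ⟨a, ha, rfl⟩ : ∃ a ≠ 0, α = conj a⁻¹ := ⟨conj α⁻¹, by simpa using hα, by simp⟩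
  simp only [map_inv₀, starRingEnd_self_apply, inv_inv]
  obtain ⟨r, hfac, hr⟩ := exists_eq_pow_rootMultiplicity_mul_and_not_dvd p hp a
  set m := rootMultiplicity a p
  have hr0 : r ≠ 0 := by rintro rfl; exact hr (dvd_zero _)
  have hsplit : conjReverse p = C ((-conj a) ^ m) * conjReverse r * (X - C (conj a)⁻¹) ^ m := by
    rw [hfac, conjReverse_mul, conjReverse_pow, conjReverse_X_sub_C ha, mul_pow, C_pow, map_inv₀]
    ring
  have hroot : ¬ (C ((-conj a) ^ m) * conjReverse r).IsRoot (conj a)⁻¹ := by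
    rw [dvd_iff_isRoot, IsRoot.def] at hr
    simp [eval_conjReverse r (by simpa using ha : (conj a)⁻¹ ≠ 0), ha, hr]
  rw [hsplit, rootMultiplicity_mul_X_sub_C_pow, rootMultiplicity_eq_zero hroot, zero_add]
  simp [ha, hr0, conjReverse_eq_zero]

theorem rootMultiplicity_X_pow_mul_mul_conjReverse {p : K[X]} (hp : p ≠ 0) (n : ℕ) {α : K}
    (hα : α ≠ 0) :
    rootMultiplicity α (X ^ n * (p * conjReverse p)) =
      rootMultiplicity α p + rootMultiplicity (conj α⁻¹) p := by
  have hpp : p * conjReverse p ≠ 0 := mul_ne_zero hp (conjReverse_eq_zero.not.mpr hp)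
  have hX : rootMultiplicity α (X ^ n : K[X]) = 0 := rootMultiplicity_eq_zero (by simp [hα])
  rw [rootMultiplicity_mul (mul_ne_zero (pow_ne_zero n X_ne_zero) hpp), rootMultiplicity_mul hpp,
    hX, zero_add, rootMultiplicity_conjReverse hp hα]

end Field

theorem exists_eq_C_mul_of_rootMultiplicity_eq {k : Type*} [Field k] [IsAlgClosed k] {p q : k[X]}
    (hp : p ≠ 0) (hq : q ≠ 0) (h : ∀ a, rootMultiplicity a p = rootMultiplicity a q) :
    ∃ c, q = C c * p := by
  classical
  have hroots : p.roots = q.roots := Multiset.ext.mpr fun a => by rw [count_roots, count_roots, h]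
  obtain ⟨u, hu⟩ := (IsAlgClosed.associated_iff_roots_eq_roots hp hq).mpr hroots
  obtain ⟨c, -, hc⟩ := isUnit_iff.mp u.isUnit
  exact ⟨c, by rw [← hu, ← hc, mul_comm]⟩

end Polynomial

theorem Complex.infinite_sphere_zero_one_s10 : (Metric.sphere (0 : ℂ) 1).Infinite :=
  (isPreconnected_sphere (by simp [Complex.rank_real_complex]) 0 1).infinite_of_nontrivial
    ⟨1, by simp, -1, by simp, by norm_num⟩

namespace Polynomial

theorem eq_of_forall_norm_eq_one_eval_eq {p q : ℂ[X]}
    (h : ∀ z : ℂ, ‖z‖ = 1 → p.eval z = q.eval z) : p = q :=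
  eq_of_infinite_eval_eq p q <| Complex.infinite_sphere_zero_one_s10.mono fun z hz =>
    h z (mem_sphere_zero_iff_norm.mp hz)

theorem eval_conjReverse_of_norm_eq_one (p : ℂ[X]) {z : ℂ} (hz : ‖z‖ = 1) :
    (conjReverse p).eval z = z ^ p.natDegree * conj (p.eval z) := by
  rw [eval_conjReverse p (norm_ne_zero_iff.mp (hz ▸ one_ne_zero)), RCLike.inv_eq_conj hz,
    starRingEnd_self_apply]

theorem X_pow_mul_mul_conjReverse_eq {p q : ℂ[X]}
    (h : ∀ z : ℂ, ‖z‖ = 1 → ‖p.eval z‖ = ‖q.eval z‖) :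
    X ^ q.natDegree * (p * conjReverse p) = X ^ p.natDegree * (q * conjReverse q) := by
  refine eq_of_forall_norm_eq_one_eval_eq fun z hz => ?_
  simp only [eval_mul, eval_pow, eval_X, eval_conjReverse_of_norm_eq_one _ hz]
  have hp := RCLike.mul_conj (p.eval z)
  have hq := RCLike.mul_conj (q.eval z)
  rw [h z hz] at hp
  linear_combination (z ^ p.natDegree * z ^ q.natDegree) * (hp - hq)

theorem rootMultiplicity_eq_of_norm_eval_eq {p q : ℂ[X]} (hp0 : p ≠ 0) (hq0 : q ≠ 0)
    (hp : ∀ z : ℂ, ‖z‖ < 1 → p.eval z ≠ 0) (hq : ∀ z : ℂ, ‖z‖ < 1 → q.eval z ≠ 0)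
    (h : ∀ z : ℂ, ‖z‖ = 1 → ‖p.eval z‖ = ‖q.eval z‖) (α : ℂ) :
    rootMultiplicity α p = rootMultiplicity α q := by
  rcases lt_or_ge ‖α‖ 1 with hα | hα
  · rw [rootMultiplicity_eq_zero (hp α hα), rootMultiplicity_eq_zero (hq α hα)]
  have hα0 : α ≠ 0 := norm_pos_iff.mp (by linarith)
  have hsum := congrArg (rootMultiplicity α) (X_pow_mul_mul_conjReverse_eq h)
  rw [rootMultiplicity_X_pow_mul_mul_conjReverse hp0 _ hα0,
    rootMultiplicity_X_pow_mul_mul_conjReverse hq0 _ hα0] at hsum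
  rcases hα.lt_or_eq with hα | hα
  · have hinv : ‖conj α⁻¹‖ < 1 := by
      rw [RCLike.norm_conj, norm_inv]
      exact inv_lt_one_of_one_lt₀ hα
    rwa [rootMultiplicity_eq_zero (hp _ hinv), rootMultiplicity_eq_zero (hq _ hinv),
      add_zero, add_zero] at hsum
  · rw [RCLike.inv_eq_conj hα.symm, starRingEnd_self_apply] at hsum
    omega

theorem norm_eq_one_of_norm_eval_C_mul_eq {p : ℂ[X]} (hp : p ≠ 0) {c : ℂ}
    (h : ∀ z : ℂ, ‖z‖ = 1 → ‖p.eval z‖ = ‖(C c * p).eval z‖) : ‖c‖ = 1 := by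
  by_contra hc
  refine hp (eq_of_forall_norm_eq_one_eval_eq fun z hz => ?_)
  have hz := h z hz
  rw [eval_mul, eval_C, norm_mul, eq_comm, mul_left_eq_self₀] at hz
  simpa [hc] using hz

end Polynomial

theorem complementary_polynomial_unique_up_to_phase (P Q₁ Q₂ : Polynomial ℂ)
    (h₁ : ∀ z : ℂ, ‖z‖ = 1 →
      ‖P.eval z‖ ^ 2 + ‖Q₁.eval z‖ ^ 2 = 1)
    (h₂ : ∀ z : ℂ, ‖z‖ = 1 →
      ‖P.eval z‖ ^ 2 + ‖Q₂.eval z‖ ^ 2 = 1)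
    (hQ₁ : ∀ z : ℂ, ‖z‖ < 1 → Q₁.eval z ≠ 0)
    (hQ₂ : ∀ z : ℂ, ‖z‖ < 1 → Q₂.eval z ≠ 0)
    (hQ₁0 : Q₁ ≠ 0) (hQ₂0 : Q₂ ≠ 0) :
    ∃ lam : ℂ, ‖lam‖ = 1 ∧ Q₂ = Polynomial.C lam * Q₁ := by
  have hnorm : ∀ z : ℂ, ‖z‖ = 1 → ‖Q₁.eval z‖ = ‖Q₂.eval z‖ := fun z hz =>
    (sq_eq_sq₀ (norm_nonneg _) (norm_nonneg _)).mp (by linarith [h₁ z hz, h₂ z hz])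
  obtain ⟨lam, rfl⟩ := exists_eq_C_mul_of_rootMultiplicity_eq hQ₁0 hQ₂0
    (rootMultiplicity_eq_of_norm_eval_eq hQ₁0 hQ₂0 hQ₁ hQ₂ hnorm)
  exact ⟨lam, norm_eq_one_of_norm_eval_C_mul_eq hQ₁0 hnorm, rfl⟩
end
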